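/- arXiv:2305.00728 — 2 statements merged into one kernel-verified Lean document; each statement's English description precedes it below -/
import Mathlib

section
/- For γ = 2, the radial principal eigenvalue of the Pucci minimal operator satisfies λ̄'_2(𝓜⁻) = λ·(Ñ₋−2)²/4. Moreover the function u(r) = r^{−(Ñ₋−2)/2}·(−ln r) is positive on (0,1), satisfies u(1) = 0, and solves 𝓜⁻[u](r) + λ·((Ñ₋−2)/2)²·u(r)·r^{−2} = 0 for all r ∈ (0,1). -/
/-!
If `u > 0` satisfies `𝓜⁻[u] + μ u r⁻² ≤ 0` with `μ > λ α²`, `α = (Ñ₋ - 2)/2`, write the Pucci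
operator at each `r` as `a u'' + (N - 1) b u'/r` with `a, b ∈ [λ, Λ]`. The Riccati variable
`x = -r u'/u` then satisfies `a r x' ≥ a x² - ((N - 1) b - a) x + μ`, and `λ α²` bounds the
discriminants `((N - 1) b - a)² / (4a)` (the worst case is `a = λ`, `b = Λ`), so `r x' ≥ c (1 + x²)`
for a fixed `c > 0`. Hence `arctan x - c log r` is nondecreasing on `(0, 1)`, impossible since
`arctan` is bounded while `log r → -∞`. Conversely `r^{-α} (-log r)` is a positive eigenfunction
for `λ α²`.
-/
open Set Real Filter MeasureTheory

noncomputable section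

/-- The radial expression of the Pucci maximal operator `𝓜⁺` applied to a radial
function `u = u(r)`. -/
def pucciP (lam Lam : ℝ) (N : ℕ) (u : ℝ → ℝ) (r : ℝ) : ℝ :=
  Lam * max (deriv (deriv u) r) 0 - lam * max (-(deriv (deriv u) r)) 0 +
  ((N : ℝ) - 1) * (Lam * max (deriv u r / r) 0 - lam * max (-(deriv u r / r)) 0)

/-- The radial expression of the Pucci minimal operator `𝓜⁻` applied to a radial
function `u = u(r)`. -/
def pucciM (lam Lam : ℝ) (N : ℕ) (u : ℝ → ℝ) (r : ℝ) : ℝ :=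
  lam * max (deriv (deriv u) r) 0 - Lam * max (-(deriv (deriv u) r)) 0 +
  ((N : ℝ) - 1) * (lam * max (deriv u r / r) 0 - Lam * max (-(deriv u r / r)) 0)

/-- The radial principal eigenvalue `λ̄'_γ` on the punctured unit ball for a radial
operator `Op`. -/
def radialEVop (Op : (ℝ → ℝ) → ℝ → ℝ) (γ : ℝ) : ℝ :=
  sSup {μ : ℝ | ∃ u : ℝ → ℝ, ContDiffOn ℝ 2 u (Ioo 0 1) ∧
    (∀ r ∈ Ioo (0:ℝ) 1, 0 < u r) ∧
    (∀ r ∈ Ioo (0:ℝ) 1, Op u r + μ * u r * r ^ (-γ) ≤ 0)}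

lemma exists_mem_Icc_extremal_eq_mul {lam Lam : ℝ} (hlL : lam ≤ Lam) (d : ℝ) :
    ∃ a ∈ Icc lam Lam, lam * max d 0 - Lam * max (-d) 0 = a * d := by
  rcases le_total 0 d with hd | hd
  · exact ⟨lam, ⟨le_rfl, hlL⟩, by simp [hd]⟩
  · exact ⟨Lam, ⟨hlL, le_rfl⟩, by simp [hd]⟩

lemma exists_pucciM_eq {lam Lam : ℝ} (hlL : lam ≤ Lam) (N : ℕ) (u : ℝ → ℝ) (r : ℝ) :
    ∃ a ∈ Icc lam Lam, ∃ b ∈ Icc lam Lam,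
      pucciM lam Lam N u r = a * deriv (deriv u) r + ((N : ℝ) - 1) * (b * (deriv u r / r)) := by
  obtain ⟨a, ha, hda⟩ := exists_mem_Icc_extremal_eq_mul hlL (deriv (deriv u) r)
  obtain ⟨b, hb, hdb⟩ := exists_mem_Icc_extremal_eq_mul hlL (deriv u r / r)
  exact ⟨a, ha, b, hb, by rw [pucciM, hda, hdb]⟩

lemma pucciM_eq_of_nonneg_of_nonpos {lam Lam : ℝ} {N : ℕ} {u : ℝ → ℝ} {r : ℝ}
    (h2 : 0 ≤ deriv (deriv u) r) (h1 : deriv u r / r ≤ 0) :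
    pucciM lam Lam N u r = lam * deriv (deriv u) r + ((N : ℝ) - 1) * (Lam * (deriv u r / r)) := by
  rw [pucciM, max_eq_left h2, max_eq_right (neg_nonpos.mpr h2), max_eq_right h1,
    max_eq_left (neg_nonneg.mpr h1)]
  ring

lemma sq_mul_sub_le {n lam Lam a b : ℝ} (hlam : 0 < lam) (hn : Lam ≤ n * lam)
    (ha : a ∈ Icc lam Lam) (hb : b ∈ Icc lam Lam) :
    lam * (n * b - a) ^ 2 ≤ a * (n * Lam - lam) ^ 2 := by
  obtain ⟨hla, haL⟩ := ha
  obtain ⟨hlb, hbL⟩ := hb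
  have hn1 : 1 ≤ n := by nlinarith
  calc lam * (n * b - a) ^ 2 ≤ lam * (n * Lam - a) ^ 2 := by
        gcongr
        nlinarith
    _ ≤ a * (n * Lam - lam) ^ 2 := by
        have haL' : a ≤ n * Lam := by nlinarith
        have hnL : a * lam ≤ (n * Lam) ^ 2 := by
          nlinarith [mul_le_mul haL' (hla.trans haL') hlam.le (by linarith)]
        nlinarith [mul_nonneg (sub_nonneg.mpr hla) (sub_nonneg.mpr hnL)]

lemma quadratic_nonneg_of_sq_le {p β q : ℝ} (hp : 0 < p) (h : β ^ 2 ≤ 4 * p * q) (x : ℝ) :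
    0 ≤ p * x ^ 2 - β * x + q := by
  nlinarith [sq_nonneg (2 * p * x - β)]

lemma riccati_lower_bound {n a b κ μ c U U' U'' r : ℝ} (ha : 0 < a) (hU : 0 < U) (hr : 0 < r)
    (hcoef : (n * b - a) ^ 2 ≤ 4 * a * κ) (hc1 : c < 1) (hcμ : κ ≤ (1 - c) * (μ - c * a))
    (hsuper : a * U'' + n * (b * (U' / r)) + μ * U / r ^ 2 ≤ 0) :
    c * (1 + (-(r * U') / U) ^ 2) ≤ -(r * U') / U + (-(r * U') / U) ^ 2 - r ^ 2 * U'' / U := by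
  set x := -(r * U') / U with hx
  have hscaled : a * (r ^ 2 * U'' / U) - n * b * x + μ ≤ 0 := by
    have e : a * (r ^ 2 * U'' / U) - n * b * x + μ
        = (a * U'' + n * (b * (U' / r)) + μ * U / r ^ 2) * (r ^ 2 / U) := by
      rw [hx]; field_simp; ring
    rw [e]
    exact mul_nonpos_of_nonpos_of_nonneg hsuper (by positivity)
  have hq := quadratic_nonneg_of_sq_le (q := μ - c * a) (mul_pos ha (sub_pos.mpr hc1))
    (hcoef.trans (by nlinarith)) x
  refine le_of_mul_le_mul_left ?_ ha
  linear_combination hscaled + hq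

theorem false_of_riccati_ineq {x x' : ℝ → ℝ} {c : ℝ} (hc : 0 < c)
    (hx : ∀ r ∈ Ioo (0 : ℝ) 1, HasDerivAt x (x' r) r)
    (h : ∀ r ∈ Ioo (0 : ℝ) 1, c * (1 + x r ^ 2) ≤ r * x' r) : False := by
  have hφ : ∀ r ∈ Ioo (0 : ℝ) 1, HasDerivAt (fun s => arctan (x s) - c * log s)
      (1 / (1 + x r ^ 2) * x' r - c * r⁻¹) r := fun r hr =>
    (hx r hr).arctan.sub ((hasDerivAt_log hr.1.ne').const_mul c)
  have hmono : MonotoneOn (fun s => arctan (x s) - c * log s) (Ioo 0 1) := by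
    refine monotoneOn_of_hasDerivWithinAt_nonneg (convex_Ioo 0 1)
      (fun r hr => (hφ r hr).continuousAt.continuousWithinAt)
      (fun r hr => (hφ r (interior_subset hr)).hasDerivWithinAt) fun r hr => ?_
    rw [interior_Ioo] at hr
    have hden : 0 < 1 + x r ^ 2 := by positivity
    rw [sub_nonneg, ← div_eq_mul_inv, one_div_mul_eq_div, div_le_div_iff₀ hr.1 hden]
    linarith [h r hr]
  set r₀ := exp (-(π / c)) / 2
  have hr₀ : 0 < r₀ := by positivity
  have hr₀half : r₀ ≤ 1 / 2 := by
    have : exp (-(π / c)) ≤ 1 := exp_le_one_iff.mpr (neg_nonpos.mpr (div_pos pi_pos hc).le)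
    change exp (-(π / c)) / 2 ≤ 1 / 2
    linarith
  have hlog : c * log r₀ = -π + c * log (1 / 2) := by
    rw [log_div (exp_pos _).ne' two_ne_zero, log_exp, one_div, log_inv]
    field_simp
    ring
  have key := hmono ⟨hr₀, by linarith⟩ ⟨by norm_num, by norm_num⟩ hr₀half
  simp only [hlog] at key
  linarith [neg_pi_div_two_lt_arctan (x r₀), arctan_lt_pi_div_two (x (1 / 2))]

lemma hasDerivAt_riccati {u : ℝ → ℝ} {s : Set ℝ} (hs : IsOpen s) (hu : ContDiffOn ℝ 2 u s)
    {r : ℝ} (hr : r ∈ s) (hr0 : r ≠ 0) (hu0 : u r ≠ 0) :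
    HasDerivAt (fun t => -(t * deriv u t) / u t)
      ((-(r * deriv u r) / u r + (-(r * deriv u r) / u r) ^ 2
        - r ^ 2 * deriv (deriv u) r / u r) / r) r := by
  have h1 : HasDerivAt u (deriv u r) r :=
    ((hu.differentiableOn (by norm_num)) r hr).differentiableAt (hs.mem_nhds hr) |>.hasDerivAt
  have h2 : HasDerivAt (deriv u) (deriv (deriv u) r) r :=
    (((hu.deriv_of_isOpen hs (m := 1) (by norm_num)).differentiableOn one_ne_zero) r hr
      ).differentiableAt (hs.mem_nhds hr) |>.hasDerivAt
  refine (((hasDerivAt_id r).mul h2).neg.div h1 hu0).congr_deriv ?_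
  simp only [Pi.neg_apply, Pi.mul_apply, id]
  field_simp
  ring

theorem le_of_pucciM_supersolution {N : ℕ} {lam Lam α μ : ℝ} {u : ℝ → ℝ} (hlam : 0 < lam)
    (hlL : lam ≤ Lam) (hn : Lam ≤ ((N : ℝ) - 1) * lam)
    (hrel : ((N : ℝ) - 1) * Lam = lam * (2 * α + 1))
    (hu : ContDiffOn ℝ 2 u (Ioo 0 1)) (hpos : ∀ r ∈ Ioo (0 : ℝ) 1, 0 < u r)
    (hsuper : ∀ r ∈ Ioo (0 : ℝ) 1, pucciM lam Lam N u r + μ * u r * r ^ (-(2 : ℝ)) ≤ 0) :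
    μ ≤ lam * α ^ 2 := by
  by_contra! hμ
  have hLam : 0 < Lam := hlam.trans_le hlL
  have hμL : 0 < μ + Lam := by nlinarith [sq_nonneg α]
  set c := (μ - lam * α ^ 2) / (μ + Lam)
  have hc : 0 < c := div_pos (by linarith) hμL
  have hc1 : c < 1 := (div_lt_one hμL).mpr (by nlinarith [sq_nonneg α])
  have hcμ : c * (μ + Lam) = μ - lam * α ^ 2 := div_mul_cancel₀ _ hμL.ne'
  refine false_of_riccati_ineq hc
    (fun r hr => hasDerivAt_riccati isOpen_Ioo hu hr hr.1.ne' (hpos r hr).ne') fun r hr => ?_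
  rw [mul_div_cancel₀ _ hr.1.ne']
  obtain ⟨a, ha, b, hb, hab⟩ := exists_pucciM_eq hlL N u r
  have hcoef : (((N : ℝ) - 1) * b - a) ^ 2 ≤ 4 * a * (lam * α ^ 2) := by
    have h := sq_mul_sub_le hlam hn ha hb
    rw [show ((N : ℝ) - 1) * Lam - lam = 2 * lam * α by linarith] at h
    refine le_of_mul_le_mul_left ?_ hlam
    linear_combination h
  refine riccati_lower_bound (μ := μ) (hlam.trans_le ha.1) (hpos r hr) hr.1 hcoef hc1 ?_ ?_
  · nlinarith [mul_nonneg hc.le (sub_nonneg.mpr ha.2),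
      mul_nonneg (sq_nonneg c) (hlam.le.trans ha.1)]
  · have h := hsuper r hr
    rwa [hab, rpow_neg hr.1.le, rpow_two, ← div_eq_mul_inv] at h

lemma rpow_mul_neg_log_pos (β : ℝ) {r : ℝ} (hr : r ∈ Ioo (0 : ℝ) 1) : 0 < r ^ β * -log r :=
  mul_pos (rpow_pos_of_pos hr.1 β) (neg_pos.mpr (log_neg hr.1 hr.2))

lemma hasDerivAt_rpow_neg_mul_neg_log (α : ℝ) {r : ℝ} (hr : 0 < r) :
    HasDerivAt (fun x => x ^ (-α) * -log x) (-r ^ (-α - 1) * (α * -log r + 1)) r := by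
  refine ((hasDerivAt_rpow_const (Or.inl hr.ne')).mul (hasDerivAt_log hr.ne').neg).congr_deriv ?_
  rw [rpow_sub hr, rpow_one, Pi.neg_apply]
  field_simp
  ring

lemma hasDerivAt_deriv_rpow_neg_mul_neg_log (α : ℝ) {r : ℝ} (hr : 0 < r) :
    HasDerivAt (fun x => -x ^ (-α - 1) * (α * -log x + 1))
      (r ^ (-α - 2) * (α * (α + 1) * -log r + (2 * α + 1))) r := by
  refine ((hasDerivAt_rpow_const (Or.inl hr.ne')).neg.mul
    (((hasDerivAt_log hr.ne').neg.const_mul α).add_const 1)).congr_deriv ?_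
  rw [show -α - 2 = -α - 1 - 1 by ring, rpow_sub hr (-α - 1), rpow_one]
  simp only [Pi.neg_apply]
  field_simp
  ring

lemma deriv_deriv_rpow_neg_mul_neg_log (α : ℝ) {r : ℝ} (hr : 0 < r) :
    deriv (deriv fun x => x ^ (-α) * -log x) r
      = r ^ (-α - 2) * (α * (α + 1) * -log r + (2 * α + 1)) := by
  have h : deriv (fun x => x ^ (-α) * -log x)
      =ᶠ[nhds r] fun x => -x ^ (-α - 1) * (α * -log x + 1) :=
    Filter.eventuallyEq_of_mem (Ioi_mem_nhds hr) fun x hx =>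
      (hasDerivAt_rpow_neg_mul_neg_log α hx).deriv
  rw [h.deriv_eq]
  exact (hasDerivAt_deriv_rpow_neg_mul_neg_log α hr).deriv

lemma pucciM_rpow_neg_mul_neg_log {N : ℕ} {lam Lam α : ℝ} (hα : 0 ≤ α)
    (hrel : ((N : ℝ) - 1) * Lam = lam * (2 * α + 1)) {r : ℝ} (hr : r ∈ Ioo (0 : ℝ) 1) :
    pucciM lam Lam N (fun x => x ^ (-α) * -log x) r
      + lam * α ^ 2 * (r ^ (-α) * -log r) * r ^ (-(2 : ℝ)) = 0 := by
  have hr0 := hr.1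
  have hL : 0 < -log r := neg_pos.mpr (log_neg hr.1 hr.2)
  have h2 : 0 ≤ deriv (deriv fun x => x ^ (-α) * -log x) r := by
    rw [deriv_deriv_rpow_neg_mul_neg_log α hr0]
    positivity
  have h1 : deriv (fun x => x ^ (-α) * -log x) r / r ≤ 0 := by
    rw [(hasDerivAt_rpow_neg_mul_neg_log α hr0).deriv]
    refine div_nonpos_of_nonpos_of_nonneg ?_ hr0.le
    exact mul_nonpos_of_nonpos_of_nonneg (by simp [(rpow_pos_of_pos hr0 _).le]) (by positivity)
  rw [pucciM_eq_of_nonneg_of_nonpos h2 h1, deriv_deriv_rpow_neg_mul_neg_log α hr0,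
    (hasDerivAt_rpow_neg_mul_neg_log α hr0).deriv,
    show -α - 1 = -α - 2 + 1 by ring, rpow_add hr0, rpow_one,
    show r ^ (-α) = r ^ (-α - 2) * r ^ 2 by rw [← rpow_two, ← rpow_add hr0]; ring_nf,
    rpow_neg hr0.le, rpow_two]
  field_simp
  linear_combination r ^ (-α - 2) * (α * log r - 1) * hrel

theorem isGreatest_pucciM_eigenvalues {N : ℕ} {lam Lam α : ℝ} (hlam : 0 < lam) (hlL : lam ≤ Lam)
    (hn : Lam ≤ ((N : ℝ) - 1) * lam) (hrel : ((N : ℝ) - 1) * Lam = lam * (2 * α + 1)) :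
    IsGreatest {μ : ℝ | ∃ u : ℝ → ℝ, ContDiffOn ℝ 2 u (Ioo 0 1) ∧
      (∀ r ∈ Ioo (0 : ℝ) 1, 0 < u r) ∧
      (∀ r ∈ Ioo (0 : ℝ) 1, pucciM lam Lam N u r + μ * u r * r ^ (-(2 : ℝ)) ≤ 0)}
      (lam * α ^ 2) := by
  have hα : 0 ≤ α := by nlinarith
  refine ⟨⟨fun x => x ^ (-α) * -log x, fun r hr => ?_, fun r hr => rpow_mul_neg_log_pos _ hr,
    fun r hr => (pucciM_rpow_neg_mul_neg_log hα hrel hr).le⟩, ?_⟩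
  · exact ((contDiffAt_rpow_const_of_ne hr.1.ne').mul
      (contDiffAt_log.mpr hr.1.ne').neg).contDiffWithinAt
  · rintro μ ⟨u, hu, hpos, hsuper⟩
    exact le_of_pucciM_supersolution hlam hlL hn hrel hu hpos hsuper

theorem stmt3_general (N : ℕ) (lam Lam : ℝ) (hlam : 0 < lam) (hlL : lam ≤ Lam)
    (hNp : 2 < lam / Lam * ((N : ℝ) - 1) + 1)
    (Nm : ℝ) (hNmdef : Nm = Lam / lam * ((N : ℝ) - 1) + 1) :
    radialEVop (pucciM lam Lam N) 2 = lam * (Nm - 2) ^ 2 / 4 ∧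
    (∀ r ∈ Ioo (0:ℝ) 1, 0 < r ^ (-((Nm - 2) / 2)) * (-Real.log r)) ∧
    ((1:ℝ) ^ (-((Nm - 2) / 2)) * (-Real.log 1) = 0) ∧
    (∀ r ∈ Ioo (0:ℝ) 1,
      pucciM lam Lam N (fun r => r ^ (-((Nm - 2) / 2)) * (-Real.log r)) r
        + lam * ((Nm - 2) / 2) ^ 2
          * (r ^ (-((Nm - 2) / 2)) * (-Real.log r)) * r ^ (-(2:ℝ)) = 0) := by
  have hLam : 0 < Lam := hlam.trans_le hlL
  have hn : Lam ≤ ((N : ℝ) - 1) * lam := by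
    have e : lam / Lam * ((N : ℝ) - 1) * Lam = ((N : ℝ) - 1) * lam := by field_simp
    nlinarith
  set α := (Nm - 2) / 2 with hα
  have hrel : ((N : ℝ) - 1) * Lam = lam * (2 * α + 1) := by
    rw [hα, hNmdef]
    field_simp
    ring
  have hα0 : 0 ≤ α := by nlinarith
  refine ⟨?_, fun r hr => rpow_mul_neg_log_pos _ hr, by simp,
    fun r hr => pucciM_rpow_neg_mul_neg_log hα0 hrel hr⟩
  rw [radialEVop, (isGreatest_pucciM_eigenvalues hlam hlL hn hrel).csSup_eq, hα]
  ring

theorem stmt3 (N : ℕ) (hN : 2 ≤ N) (lam Lam : ℝ) (hlam : 0 < lam) (hlL : lam ≤ Lam)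
    (hNp : 2 < lam / Lam * ((N : ℝ) - 1) + 1)
    (Nm : ℝ) (hNmdef : Nm = Lam / lam * ((N : ℝ) - 1) + 1) :
    radialEVop (pucciM lam Lam N) 2 = lam * (Nm - 2) ^ 2 / 4 ∧
    (∀ r ∈ Ioo (0:ℝ) 1, 0 < r ^ (-((Nm - 2) / 2)) * (-Real.log r)) ∧
    ((1:ℝ) ^ (-((Nm - 2) / 2)) * (-Real.log 1) = 0) ∧
    (∀ r ∈ Ioo (0:ℝ) 1,
      pucciM lam Lam N (fun r => r ^ (-((Nm - 2) / 2)) * (-Real.log r)) r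
        + lam * ((Nm - 2) / 2) ^ 2
          * (r ^ (-((Nm - 2) / 2)) * (-Real.log r)) * r ^ (-(2:ℝ)) = 0) :=
  stmt3_general N lam Lam hlam hlL hNp Nm hNmdef

end
end

section
/- Let 0 < γ < 2, let f : (0,1) → ℝ be continuous, bounded and everywhere positive, and let u : (0,1) → ℝ be a bounded C² function satisfying 𝓜⁺[u](r) = f(r)·r^{−γ} for all r ∈ (0,1). Then there exist r₀ ∈ (0,1) and c > 0 such that u'(r) ≤ (sup_{(0,1)} f)/(λ·(N−γ))·r^{1−γ} and |u'(r)| ≤ c·r^{1−γ} for all r ∈ (0,r₀). Consequently u extends to a function on [0,1) which is locally Lipschitz continuous if γ ≤ 1, of class C¹ if γ < 1, and locally Hölder continuous with exponent 2−γ if γ > 1. -/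
/-!
Write `g = u'`. Where `g < 0`, the equation reads `Λ u'' + λ (N - 1) u' / r = f r^(-γ) > 0`, so
`r^k g` with `k = λ (N - 1) / Λ > 1` increases there. A negative value of `g` therefore propagates
down to `0` as `g ≤ -c r^(-k)`, and `u` would blow up like `r^(1-k)`; hence `g ≥ 0`.
Then `𝓜⁺[u] ≥ λ (u'' + (N - 1) u' / r)` gives `(r^(N-1) g - K r^(N-γ))' ≤ 0` for
`K = sup f / (λ (N - γ))`, and `r^(N-1) g` cannot stay above a positive constant near `0` (else `u`
would diverge like `log r`), so `g ≤ K r^(1-γ)`. Being monotone and bounded, `u` has a limit at `0`;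
comparing `u` on `[x, y]` with `K (r - x)^(2-γ) / (2 - γ)` gives the Lipschitz and Hölder bounds,
and `u' → 0` gives `C¹` when `γ < 1`.
-/

open Set Real Filter MeasureTheory

noncomputable section

open Function
open scoped Topology

theorem le_of_deriv_nonneg_of_neg {ψ ψ' : ℝ → ℝ} {a b : ℝ} (hab : a ≤ b)
    (hc : ContinuousOn ψ (Icc a b)) (hd : ∀ x ∈ Ioo a b, HasDerivAt ψ (ψ' x) x)
    (hψ' : ∀ x ∈ Ioo a b, ψ x < 0 → 0 ≤ ψ' x) (hb : ψ b < 0) : ψ a ≤ ψ b := by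
  have le_of_neg_on : ∀ c ∈ Icc a b, (∀ x ∈ Ioc c b, ψ x < 0) → ψ c ≤ ψ b := by
    intro c hc' hneg
    have hcb : Ioo c b ⊆ Ioo a b := Ioo_subset_Ioo_left hc'.1
    refine monotoneOn_of_hasDerivWithinAt_nonneg (convex_Icc c b)
      (hc.mono (Icc_subset_Icc_left hc'.1))
      (fun x hx => (hd x (hcb (by rwa [interior_Icc] at hx))).hasDerivWithinAt)
      (fun x hx => ?_) (left_mem_Icc.2 hc'.2) (right_mem_Icc.2 hc'.2) hc'.2
    rw [interior_Icc] at hx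
    exact hψ' x (hcb hx) (hneg x (Ioo_subset_Ioc_self hx))
  suffices hneg : ∀ x ∈ Icc a b, ψ x < 0 from
    le_of_neg_on a (left_mem_Icc.2 hab) fun x hx => hneg x (Ioc_subset_Icc_self hx)
  by_contra! ⟨x, hx, hx0⟩
  -- the last point of `[a, b]` where `ψ ≥ 0`
  obtain ⟨c, ⟨hcI, hc0⟩, hcmax⟩ := IsCompact.exists_isGreatest
    (isCompact_Icc.of_isClosed_subset
      (hc.preimage_isClosed_of_isClosed isClosed_Icc isClosed_Ici) inter_subset_left)
    ⟨x, hx, hx0⟩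
  have hcb := le_of_neg_on c hcI fun y hy => not_le.1 fun hy0 =>
    hy.1.not_ge (hcmax ⟨⟨hcI.1.trans hy.1.le, hy.2⟩, hy0⟩)
  exact (hc0.trans hcb).not_gt hb

theorem tendsto_atTop_of_deriv_le {u u' G G' : ℝ → ℝ} {a b : ℝ} (hab : a < b)
    (hu : ∀ x ∈ Ioo a b, HasDerivAt u (u' x) x) (hG : ∀ x ∈ Ioo a b, HasDerivAt G (G' x) x)
    (hle : ∀ x ∈ Ioo a b, u' x ≤ G' x) (hG_lim : Tendsto G (𝓝[>] a) atTop) :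
    Tendsto u (𝓝[>] a) atTop := by
  obtain ⟨c, hc⟩ := nonempty_Ioo.2 hab
  have hmono : MonotoneOn (fun x => G x - u x) (Ioo a b) :=
    monotoneOn_of_hasDerivWithinAt_nonneg (convex_Ioo a b)
      (fun x hx => ((hG x hx).continuousAt.sub (hu x hx).continuousAt).continuousWithinAt)
      (fun x hx => ((hG x (interior_subset hx)).sub (hu x (interior_subset hx))).hasDerivWithinAt)
      fun x hx => sub_nonneg.2 (hle x (interior_subset hx))
  refine tendsto_atTop_mono' _ ?_ (tendsto_atTop_add_const_right _ (u c - G c) hG_lim)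
  filter_upwards [Ioo_mem_nhdsGT hc.1] with x hx
  have := hmono ⟨hx.1, hx.2.trans hc.2⟩ hc hx.2.le
  simp only at this
  linarith

theorem not_tendsto_atTop_of_le {u : ℝ → ℝ} {a b C : ℝ} (hab : a < b)
    (hC : ∀ x ∈ Ioo a b, u x ≤ C) : ¬Tendsto u (𝓝[>] a) atTop := fun h =>
  let ⟨x, hxC, hx⟩ := ((h.eventually_gt_atTop C).and (Ioo_mem_nhdsGT hab)).exists
  (hC x hx).not_gt hxC

theorem frequently_rpow_mul_lt_of_le {u u' : ℝ → ℝ} {p C ε : ℝ} (hp : 1 ≤ p) (hε : 0 < ε)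
    (hu : ∀ x ∈ Ioo 0 1, HasDerivAt u (u' x) x) (hC : ∀ x ∈ Ioo 0 1, C ≤ u x) :
    ∃ᶠ s in 𝓝[>] 0, s ^ p * u' s < ε := by
  -- otherwise `u' x ≥ ε / x` near `0`, and `u` would diverge like `ε log x`
  by_contra! hev
  obtain ⟨b, hb, hsub⟩ := mem_nhdsGT_iff_exists_Ioo_subset.1 (hev.and (Ioo_mem_nhdsGT one_pos))
  refine not_tendsto_atTop_of_le (u := fun x => -u x) (C := -C) hb
    (fun x hx => neg_le_neg (hC x (hsub hx).2)) ?_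
  refine tendsto_atTop_of_deriv_le hb (fun x hx => (hu x (hsub hx).2).neg)
    (fun x hx => ((hasDerivAt_log hx.1.ne').const_mul ε).neg) (fun x hx => ?_)
    (tendsto_neg_atBot_atTop.comp (tendsto_log_nhdsGT_zero.const_mul_atBot hε))
  obtain ⟨hεx, hx0, hx1⟩ := hsub hx
  have hxp : x ^ p ≤ x := by
    simpa using rpow_le_rpow_of_exponent_ge hx0 hx1.le hp
  have : ε ≤ x * u' x := hεx.trans (mul_le_mul_of_nonneg_right hxp
    (nonneg_of_mul_nonneg_right (hε.le.trans hεx) (rpow_pos_of_pos hx0 p)))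
  rw [neg_le_neg_iff, ← div_eq_mul_inv, div_le_iff₀ hx0]
  linarith

theorem le_rpow_of_deriv_add_le {g h : ℝ → ℝ} {p γ C : ℝ} (hγ : γ < p + 1) (hC : 0 ≤ C)
    (hg : ∀ x ∈ Ioo 0 1, HasDerivAt g (h x) x)
    (hsup : ∀ x ∈ Ioo 0 1, h x + p * (g x / x) ≤ C * x ^ (-γ))
    (hfreq : ∀ ε > 0, ∃ᶠ s in 𝓝[>] 0, s ^ p * g s < ε) :
    ∀ r ∈ Ioo 0 1, g r ≤ C / (p + 1 - γ) * r ^ (1 - γ) := by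
  set K := C / (p + 1 - γ)
  have hK : 0 ≤ K := div_nonneg hC (by linarith)
  have hanti : AntitoneOn (fun t => t ^ p * g t - K * t ^ (p + 1 - γ)) (Ioo 0 1) := by
    have hd : ∀ x ∈ Ioo (0 : ℝ) 1, HasDerivAt (fun t => t ^ p * g t - K * t ^ (p + 1 - γ))
        (p * x ^ (p - 1) * g x + x ^ p * h x - K * ((p + 1 - γ) * x ^ (p + 1 - γ - 1))) x :=
      fun x hx => ((hasDerivAt_rpow_const (Or.inl hx.1.ne')).mul (hg x hx)).sub
        ((hasDerivAt_rpow_const (Or.inl hx.1.ne')).const_mul K)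
    refine antitoneOn_of_hasDerivWithinAt_nonpos (convex_Ioo 0 1)
      (fun x hx => (hd x hx).continuousAt.continuousWithinAt)
      (fun x hx => (hd x (interior_subset hx)).hasDerivWithinAt) (fun x hx => ?_)
    replace hx := interior_subset hx
    have hpγ : p + 1 - γ ≠ 0 := by linarith
    have hφ' : p * x ^ (p - 1) * g x + x ^ p * h x - K * ((p + 1 - γ) * x ^ (p + 1 - γ - 1))
        = x ^ p * (h x + p * (g x / x)) - x ^ p * (C * x ^ (-γ)) := by
      rw [rpow_sub_one hx.1.ne', show p + 1 - γ - 1 = p + -γ by ring, rpow_add hx.1]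
      simp only [K]
      field_simp
      ring
    rw [hφ', sub_nonpos]
    exact mul_le_mul_of_nonneg_left (hsup x hx) (rpow_pos_of_pos hx.1 p).le
  intro r hr
  have hφ : r ^ p * g r - K * r ^ (p + 1 - γ) ≤ 0 := by
    refine le_of_forall_pos_lt_add fun ε hε => ?_
    obtain ⟨s, hsε, hs⟩ := ((hfreq ε hε).and_eventually (Ioo_mem_nhdsGT hr.1)).exists
    have hφs := hanti ⟨hs.1, hs.2.trans hr.2⟩ hr hs.2.le
    have : 0 ≤ K * s ^ (p + 1 - γ) := mul_nonneg hK (rpow_pos_of_pos hs.1 _).le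
    simp only at hφs
    linarith
  rw [show 1 - γ = p + 1 - γ - p by ring, rpow_sub hr.1, ← mul_div_assoc,
    le_div_iff₀ (rpow_pos_of_pos hr.1 p)]
  linarith

theorem sub_le_of_deriv_le_rpow {v v' : ℝ → ℝ} {x y K α : ℝ} (hα : 0 < α) (hxy : x ≤ y)
    (hv : ContinuousOn v (Icc x y)) (hd : ∀ t ∈ Ioo x y, HasDerivAt v (v' t) t)
    (hle : ∀ t ∈ Ioo x y, v' t ≤ K * (t - x) ^ (α - 1)) :
    v y - v x ≤ K / α * (y - x) ^ α := by
  have hw : ∀ t ∈ Ioo x y, HasDerivAt (fun t => K / α * (t - x) ^ α - v t)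
      (K / α * (1 * α * (t - x) ^ (α - 1)) - v' t) t := fun t ht =>
    ((((hasDerivAt_id' t).sub_const x).rpow_const (Or.inl (sub_pos.2 ht.1).ne')).const_mul
      (K / α)).sub (hd t ht)
  have hmono : MonotoneOn (fun t => K / α * (t - x) ^ α - v t) (Icc x y) := by
    refine monotoneOn_of_hasDerivWithinAt_nonneg (convex_Icc x y)
      (((continuous_rpow_const hα.le).comp (continuous_sub_right x)).continuousOn.const_smul
        (K / α) |>.sub hv)
      (fun t ht => (hw t (by rwa [interior_Icc] at ht)).hasDerivWithinAt) (fun t ht => ?_)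
    rw [interior_Icc] at ht
    have := hle t ht
    field_simp
    linarith
  have := hmono (left_mem_Icc.2 hxy) (right_mem_Icc.2 hxy) hxy
  simp only [sub_self, zero_rpow hα.ne'] at this
  linarith

theorem abs_sub_le_of_deriv_le_rpow {v v' : ℝ → ℝ} {a b K α : ℝ} (hα : 0 < α)
    (hv : ContinuousOn v (Ico a b)) (hd : ∀ t ∈ Ioo a b, HasDerivAt v (v' t) t)
    (hnn : ∀ t ∈ Ioo a b, 0 ≤ v' t)
    (hle : ∀ x ∈ Ico a b, ∀ t ∈ Ioo x b, v' t ≤ K * (t - x) ^ (α - 1)) :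
    ∀ x ∈ Ico a b, ∀ y ∈ Ico a b, |v x - v y| ≤ K / α * |x - y| ^ α := by
  have hmono : MonotoneOn v (Ico a b) :=
    monotoneOn_of_hasDerivWithinAt_nonneg (convex_Ico a b) hv
      (fun t ht => (hd t (by rwa [interior_Ico] at ht)).hasDerivWithinAt)
      fun t ht => hnn t (by rwa [interior_Ico] at ht)
  have key : ∀ x ∈ Ico a b, ∀ y ∈ Ico a b, x ≤ y → |v x - v y| ≤ K / α * |x - y| ^ α := by
    intro x hx y hy hxy
    have hsub : Icc x y ⊆ Ico a b := Icc_subset_Ico hx.1 hy.2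
    have hupper := sub_le_of_deriv_le_rpow hα hxy (hv.mono hsub)
      (fun t ht => hd t ⟨hx.1.trans_lt ht.1, ht.2.trans hy.2⟩)
      (fun t ht => hle x hx t ⟨ht.1, ht.2.trans hy.2⟩)
    rw [abs_sub_comm, abs_of_nonneg (sub_nonneg.2 (hmono hx hy hxy)), abs_sub_comm,
      abs_of_nonneg (sub_nonneg.2 hxy)]
    exact hupper
  intro x hx y hy
  rcases le_total x y with hxy | hyx
  · exact key x hx y hy hxy
  · rw [abs_sub_comm, abs_sub_comm x]
    exact key y hy x hx hyx

theorem exists_continuousOn_Ico_eqOn_of_monotoneOn {u : ℝ → ℝ} {a b : ℝ} (hab : a < b)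
    (hmono : MonotoneOn u (Ioo a b)) (hbdd : BddBelow (u '' Ioo a b))
    (hc : ContinuousOn u (Ioo a b)) :
    ∃ v : ℝ → ℝ, EqOn v u (Ioo a b) ∧ ContinuousOn v (Ico a b) := by
  classical
  refine ⟨update u a (sInf (u '' Ioo a b)), fun x hx => update_of_ne hx.1.ne' .., ?_⟩
  intro x hx
  rcases hx.1.eq_or_lt with rfl | hax
  · rw [continuousWithinAt_update_same, Ico_sdiff_left]
    exact (hmono.tendsto_nhdsWithin_Ioo_right (nonempty_Ioo.2 hab) hbdd).mono_left
      (nhdsWithin_mono _ Ioo_subset_Ioi_self)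
  · refine ((hc.continuousAt (Ioo_mem_nhds hax hx.2)).congr ?_).continuousWithinAt
    filter_upwards [lt_mem_nhds hax] with y hy
    exact (update_of_ne hy.ne' ..).symm

theorem contDiffOn_one_Ico_of_tendsto_deriv {v v' : ℝ → ℝ} {a b L : ℝ} (hab : a < b)
    (hv : ContinuousOn v (Ico a b)) (hd : ∀ t ∈ Ioo a b, HasDerivAt v (v' t) t)
    (hc : ContinuousOn v' (Ioo a b)) (hlim : Tendsto v' (𝓝[>] a) (𝓝 L)) :
    ContDiffOn ℝ 1 v (Ico a b) := by
  classical
  have hderiv : ∀ t ∈ Ico a b, HasDerivWithinAt v (update v' a L t) (Ico a b) t := by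
    intro t ht
    rcases ht.1.eq_or_lt with rfl | hat
    · rw [update_self]
      refine (hasDerivWithinAt_Ici_of_tendsto_deriv (s := Ioo a b)
        (fun x hx => (hd x hx).differentiableAt.differentiableWithinAt)
        ((hv a ht).mono Ioo_subset_Ico_self) (Ioo_mem_nhdsGT hab) ?_).mono Ico_subset_Ici_self
      refine hlim.congr' ?_
      filter_upwards [Ioo_mem_nhdsGT hab] with x hx
      exact (hd x hx).deriv.symm
    · rw [update_of_ne hat.ne']
      exact (hd t ⟨hat, ht.2⟩).hasDerivWithinAt
  rw [contDiffOn_one_iff_derivWithin (uniqueDiffOn_Ico a b)]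
  refine ⟨fun t ht => (hderiv t ht).differentiableWithinAt, ?_⟩
  refine ContinuousOn.congr (f := update v' a L) (fun t ht => ?_)
    (fun t ht => (hderiv t ht).derivWithin (uniqueDiffOn_Ico a b t ht))
  rcases ht.1.eq_or_lt with rfl | hat
  · rw [continuousWithinAt_update_same, Ico_sdiff_left]
    exact hlim.mono_left (nhdsWithin_mono _ Ioo_subset_Ioi_self)
  · refine ((hc.continuousAt (Ioo_mem_nhds hat ht.2)).congr ?_).continuousWithinAt
    filter_upwards [lt_mem_nhds hat] with y hy
    exact (update_of_ne hy.ne' ..).symm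

theorem exists_extension_of_deriv_le_rpow {u u' : ℝ → ℝ} {C K γ : ℝ} (hK : 0 ≤ K)
    (hγ : γ < 2) (hd : ∀ x ∈ Ioo 0 1, HasDerivAt u (u' x) x) (hc : ContinuousOn u' (Ioo 0 1))
    (hC : ∀ x ∈ Ioo 0 1, C ≤ u x) (hnn : ∀ x ∈ Ioo 0 1, 0 ≤ u' x)
    (hle : ∀ x ∈ Ioo 0 1, u' x ≤ K * x ^ (1 - γ)) :
    ∃ v : ℝ → ℝ, EqOn v u (Ioo 0 1) ∧ ContinuousOn v (Ico 0 1) ∧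
      (γ ≤ 1 → ∀ b ∈ Ioo (0:ℝ) 1, ∃ K : ℝ, ∀ x ∈ Icc (0:ℝ) b, ∀ y ∈ Icc (0:ℝ) b,
        |v x - v y| ≤ K * |x - y|) ∧
      (γ < 1 → ContDiffOn ℝ 1 v (Ico 0 1)) ∧
      (1 < γ → ∀ b ∈ Ioo (0:ℝ) 1, ∃ C : ℝ, ∀ x ∈ Icc (0:ℝ) b, ∀ y ∈ Icc (0:ℝ) b,
        |v x - v y| ≤ C * |x - y| ^ (2 - γ)) := by
  have hmono : MonotoneOn u (Ioo 0 1) :=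
    monotoneOn_of_hasDerivWithinAt_nonneg (convex_Ioo 0 1)
      (fun x hx => (hd x hx).continuousAt.continuousWithinAt)
      (fun x hx => (hd x (interior_subset hx)).hasDerivWithinAt)
      fun x hx => hnn x (interior_subset hx)
  obtain ⟨v, hvu, hvc⟩ := exists_continuousOn_Ico_eqOn_of_monotoneOn zero_lt_one hmono
    ⟨C, by rintro _ ⟨r, hr, rfl⟩; exact hC r hr⟩
    fun x hx => (hd x hx).continuousAt.continuousWithinAt
  have hvd : ∀ t ∈ Ioo (0 : ℝ) 1, HasDerivAt v (u' t) t := fun t ht =>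
    (hd t ht).congr_of_eventuallyEq (hvu.eventuallyEq_of_mem (isOpen_Ioo.mem_nhds ht))
  refine ⟨v, hvu, hvc, fun hγ1 b hb => ⟨K, fun x hx y hy => ?_⟩, fun hγ1 => ?_,
    fun hγ1 b hb => ⟨K / (2 - γ), fun x hx y hy => ?_⟩⟩
  · have hlip := abs_sub_le_of_deriv_le_rpow (K := K) zero_lt_one hvc hvd hnn
      (fun x' hx' t ht => ?_) x (Icc_subset_Ico_right hb.2 hx) y (Icc_subset_Ico_right hb.2 hy)
    · simpa using hlip
    rw [sub_self, rpow_zero, mul_one]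
    exact (hle t ⟨hx'.1.trans_lt ht.1, ht.2⟩).trans
      (mul_le_of_le_one_right hK (rpow_le_one (hx'.1.trans ht.1.le) ht.2.le (by linarith)))
  · have hpow : Tendsto (fun t : ℝ => K * t ^ (1 - γ)) (𝓝[>] 0) (𝓝 0) := by
      have h := (continuousAt_rpow_const 0 (1 - γ) (Or.inr (by linarith))).tendsto.const_mul K
      rw [zero_rpow (by linarith), mul_zero] at h
      exact h.mono_left nhdsWithin_le_nhds
    refine contDiffOn_one_Ico_of_tendsto_deriv zero_lt_one hvc hvd hc
      (tendsto_of_tendsto_of_tendsto_of_le_of_le' tendsto_const_nhds hpow ?_ ?_) <;>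
      filter_upwards [Ioo_mem_nhdsGT zero_lt_one] with t ht
    exacts [hnn t ht, hle t ht]
  · refine abs_sub_le_of_deriv_le_rpow (by linarith) hvc hvd hnn (fun x' hx' t ht => ?_)
      x (Icc_subset_Ico_right hb.2 hx) y (Icc_subset_Ico_right hb.2 hy)
    rw [show 2 - γ - 1 = 1 - γ by ring]
    -- for `γ ≥ 1` the bound `t ^ (1 - γ)` only grows when `t` is replaced by `t - x'`
    exact (hle t ⟨hx'.1.trans_lt ht.1, ht.2⟩).trans (mul_le_mul_of_nonneg_left
      (rpow_le_rpow_of_nonpos (sub_pos.2 ht.1) (by linarith [hx'.1]) (by linarith)) hK)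

theorem hasDerivAt_deriv_of_contDiffOn_two {u : ℝ → ℝ} {s : Set ℝ} (hs : IsOpen s)
    (hu : ContDiffOn ℝ 2 u s) {x : ℝ} (hx : x ∈ s) :
    HasDerivAt u (deriv u x) x ∧ HasDerivAt (deriv u) (deriv (deriv u) x) x :=
  ⟨((hu.differentiableOn (by norm_num)).differentiableAt (hs.mem_nhds hx)).hasDerivAt,
    (((hu.deriv_of_isOpen hs (m := 1) (by norm_num)).differentiableOn one_ne_zero).differentiableAt
      (hs.mem_nhds hx)).hasDerivAt⟩

section Pucci

variable {lam Lam : ℝ} {N : ℕ} {u : ℝ → ℝ} {r : ℝ}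

theorem mul_max_sub_mul_max_neg (hlL : lam ≤ Lam) (s : ℝ) :
    Lam * max s 0 - lam * max (-s) 0 = max (lam * s) (Lam * s) := by
  rcases le_total 0 s with hs | hs
  · rw [max_eq_left hs, max_eq_right (by linarith), max_eq_right (by nlinarith)]
    ring
  · rw [max_eq_right hs, max_eq_left (by linarith), max_eq_left (by nlinarith)]
    ring

theorem pucciP_eq_max (hlL : lam ≤ Lam) :
    pucciP lam Lam N u r = max (lam * deriv (deriv u) r) (Lam * deriv (deriv u) r) +
      ((N : ℝ) - 1) * max (lam * (deriv u r / r)) (Lam * (deriv u r / r)) := by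
  simp only [pucciP, mul_max_sub_mul_max_neg hlL]

theorem lam_mul_le_pucciP (hlL : lam ≤ Lam) (hN : 1 ≤ N) :
    lam * (deriv (deriv u) r + ((N : ℝ) - 1) * (deriv u r / r)) ≤ pucciP lam Lam N u r := by
  have hN' : (0 : ℝ) ≤ N - 1 := by rw [sub_nonneg]; exact_mod_cast hN
  rw [pucciP_eq_max hlL, mul_add, mul_left_comm]
  gcongr
  · exact le_max_left _ _
  · exact le_max_left _ _

theorem pucciP_eq_of_deriv_neg (hlam : 0 < lam) (hlL : lam ≤ Lam) (hN : 1 ≤ N) (hr : 0 < r)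
    (hg : deriv u r < 0) (hpos : 0 < pucciP lam Lam N u r) :
    pucciP lam Lam N u r = Lam * deriv (deriv u) r + ((N : ℝ) - 1) * (lam * (deriv u r / r)) := by
  have hN' : (0 : ℝ) ≤ N - 1 := by rw [sub_nonneg]; exact_mod_cast hN
  rw [pucciP_eq_max hlL] at hpos ⊢
  set s := deriv (deriv u) r
  set t := deriv u r / r
  have ht : t < 0 := div_neg_of_neg_of_pos hg hr
  have hmax_t : max (lam * t) (Lam * t) = lam * t := max_eq_left (by nlinarith)
  rw [hmax_t] at hpos ⊢
  have : ((N : ℝ) - 1) * (lam * t) ≤ 0 :=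
    mul_nonpos_of_nonneg_of_nonpos hN' (mul_neg_of_pos_of_neg hlam ht).le
  have hs : 0 < s := by
    by_contra! hs
    have : max (lam * s) (Lam * s) ≤ 0 := max_le (by nlinarith) (by nlinarith)
    nlinarith
  rw [max_eq_right (by nlinarith)]

end Pucci

theorem deriv_nonneg_of_pucciP_pos {N : ℕ} {lam Lam C : ℝ} {u : ℝ → ℝ} (hlam : 0 < lam)
    (hlL : lam ≤ Lam) (hk : 1 < lam / Lam * ((N : ℝ) - 1)) (hu : ContDiffOn ℝ 2 u (Ioo 0 1))
    (hC : ∀ r ∈ Ioo 0 1, u r ≤ C) (hpos : ∀ r ∈ Ioo 0 1, 0 < pucciP lam Lam N u r) :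
    ∀ r ∈ Ioo 0 1, 0 ≤ deriv u r := by
  have hLam : 0 < Lam := hlam.trans_le hlL
  have hN : 1 ≤ N := by
    have : (0 : ℝ) < N - 1 := by
      by_contra! h
      nlinarith [mul_nonpos_of_nonneg_of_nonpos (div_pos hlam hLam).le h]
    exact_mod_cast (sub_pos.1 this).le
  set k := lam / Lam * ((N : ℝ) - 1)
  have hd := fun x (hx : x ∈ Ioo (0 : ℝ) 1) => hasDerivAt_deriv_of_contDiffOn_two isOpen_Ioo hu hx
  have hψ : ∀ x ∈ Ioo (0 : ℝ) 1, HasDerivAt (fun t => t ^ k * deriv u t)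
      (k * x ^ (k - 1) * deriv u x + x ^ k * deriv (deriv u) x) x :=
    fun x hx => (hasDerivAt_rpow_const (Or.inl hx.1.ne')).mul (hd x hx).2
  have hψ' : ∀ x ∈ Ioo (0 : ℝ) 1, x ^ k * deriv u x < 0 →
      0 ≤ k * x ^ (k - 1) * deriv u x + x ^ k * deriv (deriv u) x := by
    intro x hx hneg
    have hxk : 0 < x ^ k := rpow_pos_of_pos hx.1 k
    have hP := pucciP_eq_of_deriv_neg hlam hlL hN hx.1 (neg_of_mul_neg_right hneg hxk.le)
      (hpos x hx)
    have : k * x ^ (k - 1) * deriv u x + x ^ k * deriv (deriv u) x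
        = x ^ k / Lam * pucciP lam Lam N u x := by
      rw [hP, rpow_sub_one hx.1.ne']
      simp only [k]
      field_simp
      ring
    rw [this]
    exact mul_nonneg (div_pos hxk hLam).le (hpos x hx).le
  intro r hr
  by_contra! hgr
  set A := r ^ k * deriv u r
  have hA : A < 0 := mul_neg_of_pos_of_neg (rpow_pos_of_pos hr.1 k) hgr
  have hsub : Ioo 0 r ⊆ Ioo (0 : ℝ) 1 := Ioo_subset_Ioo_right hr.2.le
  have hbound : ∀ s ∈ Ioo 0 r, deriv u s ≤ A * s ^ (-k) := by
    intro s hs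
    have hsr : Icc s r ⊆ Ioo 0 1 := Icc_subset_Ioo hs.1 hr.2
    have := le_of_deriv_nonneg_of_neg hs.2.le
      (fun x hx => (hψ x (hsr hx)).continuousAt.continuousWithinAt)
      (fun x hx => hψ x (hsr (Ioo_subset_Icc_self hx)))
      (fun x hx => hψ' x (hsr (Ioo_subset_Icc_self hx))) hA
    rw [rpow_neg hs.1.le, ← div_eq_mul_inv, le_div_iff₀ (rpow_pos_of_pos hs.1 k), mul_comm]
    exact this
  -- integrating the bound, `u` blows up at `0` since `k > 1`
  have hG : ∀ x ∈ Ioo 0 r, HasDerivAt (fun t => A / (1 - k) * t ^ (1 - k)) (A * x ^ (-k)) x := by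
    intro x hx
    refine ((hasDerivAt_rpow_const (p := 1 - k) (Or.inl hx.1.ne')).const_mul _).congr_deriv ?_
    rw [show 1 - k - 1 = -k by ring]
    field_simp [show 1 - k ≠ 0 by linarith]
  refine not_tendsto_atTop_of_le hr.1 (fun x hx => hC x (hsub hx))
    (tendsto_atTop_of_deriv_le hr.1 (fun x hx => (hd x (hsub hx)).1) hG hbound ?_)
  exact (tendsto_rpow_neg_nhdsGT_zero (by linarith)).const_mul_atTop
    (div_pos_of_neg_of_neg hA (by linarith))

theorem deriv_le_rpow_of_pucciP_le {N : ℕ} {lam Lam C C₀ γ : ℝ} {u : ℝ → ℝ} (hN : 2 ≤ N)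
    (hlam : 0 < lam) (hlL : lam ≤ Lam) (hγ : γ < N) (hC₀ : 0 ≤ C₀)
    (hu : ContDiffOn ℝ 2 u (Ioo 0 1)) (hC : ∀ r ∈ Ioo 0 1, C ≤ u r)
    (hP : ∀ r ∈ Ioo 0 1, pucciP lam Lam N u r ≤ C₀ * r ^ (-γ)) :
    ∀ r ∈ Ioo 0 1, deriv u r ≤ C₀ / (lam * (N - γ)) * r ^ (1 - γ) := by
  have hd := fun x (hx : x ∈ Ioo (0 : ℝ) 1) => hasDerivAt_deriv_of_contDiffOn_two isOpen_Ioo hu hx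
  have hsup : ∀ x ∈ Ioo (0 : ℝ) 1,
      deriv (deriv u) x + ((N : ℝ) - 1) * (deriv u x / x) ≤ C₀ / lam * x ^ (-γ) := by
    intro x hx
    have := (lam_mul_le_pucciP (u := u) (r := x) hlL (by omega)).trans (hP x hx)
    rw [div_mul_eq_mul_div, le_div_iff₀ hlam, mul_comm]
    linarith
  have hN' : (2 : ℝ) ≤ N := by exact_mod_cast hN
  have hle := le_rpow_of_deriv_add_le (by linarith) (div_nonneg hC₀ hlam.le)
    (fun x hx => (hd x hx).2) hsup fun ε hε =>
      frequently_rpow_mul_lt_of_le (by linarith) hε (fun x hx => (hd x hx).1) hC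
  rwa [show (N : ℝ) - 1 + 1 - γ = N - γ by ring, div_div] at hle

theorem stmt8_general (N : ℕ) (hN : 2 ≤ N) (lam Lam : ℝ) (hlam : 0 < lam) (hlL : lam ≤ Lam)
    (hNp : 2 < lam / Lam * ((N : ℝ) - 1) + 1)
    (γ : ℝ) (hγ2 : γ < 2)
    (f : ℝ → ℝ)
    (hfb : ∃ C : ℝ, ∀ r ∈ Ioo (0:ℝ) 1, |f r| ≤ C)
    (hfpos : ∀ r ∈ Ioo (0:ℝ) 1, 0 < f r)
    (u : ℝ → ℝ) (hu : ContDiffOn ℝ 2 u (Ioo 0 1))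
    (hub : ∃ C : ℝ, ∀ r ∈ Ioo (0:ℝ) 1, |u r| ≤ C)
    (heq : ∀ r ∈ Ioo (0:ℝ) 1, pucciP lam Lam N u r = f r * r ^ (-γ)) :
    (∃ r₀ ∈ Ioo (0:ℝ) 1, ∃ c : ℝ, 0 < c ∧
      (∀ r ∈ Ioo (0:ℝ) r₀,
        deriv u r ≤ sSup (f '' Ioo 0 1) / (lam * ((N : ℝ) - γ)) * r ^ (1 - γ)) ∧
      (∀ r ∈ Ioo (0:ℝ) r₀, |deriv u r| ≤ c * r ^ (1 - γ))) ∧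
    ∃ v : ℝ → ℝ, EqOn v u (Ioo 0 1) ∧ ContinuousOn v (Ico 0 1) ∧
      (γ ≤ 1 → ∀ b ∈ Ioo (0:ℝ) 1, ∃ K : ℝ, ∀ x ∈ Icc (0:ℝ) b, ∀ y ∈ Icc (0:ℝ) b,
        |v x - v y| ≤ K * |x - y|) ∧
      (γ < 1 → ContDiffOn ℝ 1 v (Ico 0 1)) ∧
      (1 < γ → ∀ b ∈ Ioo (0:ℝ) 1, ∃ C : ℝ, ∀ x ∈ Icc (0:ℝ) b, ∀ y ∈ Icc (0:ℝ) b,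
        |v x - v y| ≤ C * |x - y| ^ (2 - γ)) := by
  obtain ⟨Cu, hCu⟩ := hub
  obtain ⟨Cf, hCf⟩ := hfb
  have hN' : (2 : ℝ) ≤ N := by exact_mod_cast hN
  have hd := fun x (hx : x ∈ Ioo (0 : ℝ) 1) => hasDerivAt_deriv_of_contDiffOn_two isOpen_Ioo hu hx
  have hu_lower : ∀ r ∈ Ioo (0 : ℝ) 1, -Cu ≤ u r := fun r hr => (abs_le.1 (hCu r hr)).1
  have hnn : ∀ r ∈ Ioo (0 : ℝ) 1, 0 ≤ deriv u r :=
    deriv_nonneg_of_pucciP_pos hlam hlL (by linarith) hu (fun r hr => (abs_le.1 (hCu r hr)).2)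
      fun r hr => (heq r hr).symm ▸ mul_pos (hfpos r hr) (rpow_pos_of_pos hr.1 _)
  have hf_le : ∀ r ∈ Ioo (0 : ℝ) 1, f r ≤ sSup (f '' Ioo 0 1) := fun r hr =>
    le_csSup ⟨Cf, by rintro _ ⟨s, hs, rfl⟩; exact (le_abs_self _).trans (hCf s hs)⟩ ⟨r, hr, rfl⟩
  have hhalf : (1 / 2 : ℝ) ∈ Ioo 0 1 := by norm_num
  have hC₀ : 0 < sSup (f '' Ioo 0 1) := (hfpos _ hhalf).trans_le (hf_le _ hhalf)
  have hK : 0 < sSup (f '' Ioo 0 1) / (lam * ((N : ℝ) - γ)) :=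
    div_pos hC₀ (mul_pos hlam (by linarith))
  have hle := deriv_le_rpow_of_pucciP_le hN hlam hlL (by linarith) hC₀.le hu hu_lower
    fun r hr => (heq r hr).trans_le
      (mul_le_mul_of_nonneg_right (hf_le r hr) (rpow_pos_of_pos hr.1 _).le)
  have hsub : Ioo 0 (1 / 2) ⊆ Ioo (0 : ℝ) 1 := Ioo_subset_Ioo_right (by norm_num)
  refine ⟨⟨1 / 2, hhalf, _, hK, fun r hr => hle r (hsub hr), fun r hr => ?_⟩,
    exists_extension_of_deriv_le_rpow hK.le hγ2 (fun x hx => (hd x hx).1)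
      (fun x hx => (hd x hx).2.continuousAt.continuousWithinAt) hu_lower hnn hle⟩
  rw [abs_of_nonneg (hnn r (hsub hr))]
  exact hle r (hsub hr)

theorem stmt8 (N : ℕ) (hN : 2 ≤ N) (lam Lam : ℝ) (hlam : 0 < lam) (hlL : lam ≤ Lam)
    (hNp : 2 < lam / Lam * ((N : ℝ) - 1) + 1)
    (γ : ℝ) (hγ0 : 0 < γ) (hγ2 : γ < 2)
    (f : ℝ → ℝ) (hfc : ContinuousOn f (Ioo 0 1))
    (hfb : ∃ C : ℝ, ∀ r ∈ Ioo (0:ℝ) 1, |f r| ≤ C)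
    (hfpos : ∀ r ∈ Ioo (0:ℝ) 1, 0 < f r)
    (u : ℝ → ℝ) (hu : ContDiffOn ℝ 2 u (Ioo 0 1))
    (hub : ∃ C : ℝ, ∀ r ∈ Ioo (0:ℝ) 1, |u r| ≤ C)
    (heq : ∀ r ∈ Ioo (0:ℝ) 1, pucciP lam Lam N u r = f r * r ^ (-γ)) :
    (∃ r₀ ∈ Ioo (0:ℝ) 1, ∃ c : ℝ, 0 < c ∧
      (∀ r ∈ Ioo (0:ℝ) r₀,
        deriv u r ≤ sSup (f '' Ioo 0 1) / (lam * ((N : ℝ) - γ)) * r ^ (1 - γ)) ∧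
      (∀ r ∈ Ioo (0:ℝ) r₀, |deriv u r| ≤ c * r ^ (1 - γ))) ∧
    ∃ v : ℝ → ℝ, EqOn v u (Ioo 0 1) ∧ ContinuousOn v (Ico 0 1) ∧
      (γ ≤ 1 → ∀ b ∈ Ioo (0:ℝ) 1, ∃ K : ℝ, ∀ x ∈ Icc (0:ℝ) b, ∀ y ∈ Icc (0:ℝ) b,
        |v x - v y| ≤ K * |x - y|) ∧
      (γ < 1 → ContDiffOn ℝ 1 v (Ico 0 1)) ∧
      (1 < γ → ∀ b ∈ Ioo (0:ℝ) 1, ∃ C : ℝ, ∀ x ∈ Icc (0:ℝ) b, ∀ y ∈ Icc (0:ℝ) b,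
        |v x - v y| ≤ C * |x - y| ^ (2 - γ)) :=
  stmt8_general N hN lam Lam hlam hlL hNp γ hγ2 f hfb hfpos u hu hub heq

end
end
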